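/- arXiv:1205.2913 — 4 statements merged into one kernel-verified Lean document; each statement's English description precedes it below -/
import Mathlib

section
/- Let P be a topological group that is an extension of ℤ_p^× by ℤ_p (i.e., there is a continuous surjection χ : P → ℤ_p^× with kernel isomorphic to ℤ_p). Let H ≤ P be a closed subgroup such that χ(H) is open in ℤ_p^× and H ∩ ℤ_p ≠ {0}. Then H is open in P. -/
/-!
`H` is closed, so it suffices that it has finite index. Its index is the product of its
index in the kernel `ℤ_p` of `χ`, which is finite because every nonzero closed subgroup of
`ℤ_p` contains an ideal `p^n ℤ_p`, and the index of `χ(H)`, which is finite because `χ(H)`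
is an open subgroup of the compact group `ℤ_p^×`.
-/

namespace Subgroup

variable {G : Type*} [Group G]

theorem relIndex_eq_ncard_image_mk (H K : Subgroup G) :
    H.relIndex K = ((QuotientGroup.mk : G → G ⧸ H) '' K).ncard := by
  have hsmul (k : K) : k • ((1 : G) : G ⧸ H) = (k : G ⧸ H) := congrArg _ (mul_one (k : G))
  have hstab : MulAction.stabilizer K ((1 : G) : G ⧸ H) = H.subgroupOf K := by
    ext k
    rw [MulAction.mem_stabilizer_iff, hsmul, QuotientGroup.eq, mul_one, inv_mem_iff, mem_subgroupOf]
  have horbit : MulAction.orbit K ((1 : G) : G ⧸ H) = QuotientGroup.mk '' K := by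
    ext q
    simp [MulAction.mem_orbit_iff, hsmul]
  rw [relIndex, ← hstab, MulAction.index_stabilizer, horbit]

theorem relIndex_sup_of_normal (H N : Subgroup G) [N.Normal] :
    H.relIndex (H ⊔ N) = H.relIndex N := by
  rw [relIndex_eq_ncard_image_mk, relIndex_eq_ncard_image_mk]
  refine congrArg _ (le_antisymm ?_ (Set.image_mono (SetLike.coe_subset_coe.mpr le_sup_right)))
  rintro _ ⟨x, hx, rfl⟩
  -- `H ⊔ N = N * H`, so every coset `x H` with `x ∈ H ⊔ N` has a representative in `N`.
  rw [sup_comm, SetLike.mem_coe, ← SetLike.mem_coe, normal_mul] at hx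
  obtain ⟨n, hn, h, hh, rfl⟩ := hx
  exact ⟨n, hn, (QuotientGroup.mk_mul_of_mem n hh).symm⟩

theorem index_ne_zero_of_relIndex_ker_ne_zero {Q : Type*} [Group Q] {f : G →* Q}
    (hf : Function.Surjective f) {H : Subgroup G} (hker : H.relIndex f.ker ≠ 0)
    (hmap : (H.map f).index ≠ 0) : H.index ≠ 0 := by
  rw [index_map, MonoidHom.range_eq_top.mpr hf, index_top, mul_one] at hmap
  rw [← relIndex_mul_index (le_sup_left : H ≤ H ⊔ f.ker), relIndex_sup_of_normal]
  exact mul_ne_zero hker hmap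

@[to_additive]
theorem index_ne_zero_of_isOpen [TopologicalSpace G] [SeparatelyContinuousMul G] [CompactSpace G]
    {U : Subgroup G} (hU : IsOpen (U : Set G)) : U.index ≠ 0 :=
  have := U.quotient_finite_of_isOpen hU
  finiteIndex_of_finite_quotient.index_ne_zero

end Subgroup

namespace PadicInt

variable {p : ℕ} [Fact p.Prime]

theorem isOpen_of_isClosed_of_mem {A : AddSubgroup ℤ_[p]} (hA : IsClosed (A : Set ℤ_[p]))
    {w : ℤ_[p]} (hw : w ∈ A) (hw0 : w ≠ 0) : IsOpen (A : Set ℤ_[p]) := by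
  have hspan : (Ideal.span {w} : Set ℤ_[p]) ⊆ A := by
    rintro _ hy
    obtain ⟨c, rfl⟩ := Ideal.mem_span_singleton'.mp hy
    have hmultiples : Set.range (fun n : ℕ => (n : ℤ_[p]) * w) ⊆ A := by
      rintro _ ⟨n, rfl⟩
      simpa only [nsmul_eq_mul, SetLike.mem_coe] using A.nsmul_mem hw n
    exact hA.closure_subset_iff.mpr hmultiples <|
      map_mem_closure (f := (· * w)) (continuous_mul_const w) (denseRange_natCast c)
        (Set.range_subset_iff.mpr fun n => ⟨n, rfl⟩)
  obtain ⟨n, hn⟩ := ideal_eq_span_pow_p (s := Ideal.span {w}) (by simpa using hw0)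
  have hradius : (0 : ℝ) < (p : ℝ) ^ (-n : ℤ) :=
    zpow_pos (Nat.cast_pos.mpr (Fact.out : p.Prime).pos) _
  refine A.isOpen_of_mem_nhds (g := 0) <|
    Filter.mem_of_superset (Metric.closedBall_mem_nhds 0 hradius) fun y hy => ?_
  apply hspan
  rw [SetLike.mem_coe, hn, ← norm_le_pow_iff_mem_span_pow]
  simpa using hy

theorem index_ne_zero_of_isClosed {A : Subgroup (Multiplicative ℤ_[p])}
    (hA : IsClosed (A : Set (Multiplicative ℤ_[p]))) (hA1 : A ≠ ⊥) : A.index ≠ 0 := by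
  obtain ⟨⟨z, hz⟩, hz1⟩ := Subgroup.ne_bot_iff_exists_ne_one.mp hA1
  rw [← AddSubgroup.toSubgroup.apply_symm_apply A, AddSubgroup.index_toSubgroup]
  refine AddSubgroup.index_ne_zero_of_isOpen (isOpen_of_isClosed_of_mem hA (w := z.toAdd) hz ?_)
  simpa [Subgroup.mk_eq_one] using hz1

end PadicInt

theorem stmt2_general (p : ℕ) [Fact p.Prime]
    (P : Type*) [Group P] [TopologicalSpace P] [IsTopologicalGroup P]
    (χ : P →* ℤ_[p]ˣ) (hχsurj : Function.Surjective χ)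
    (ι : Multiplicative ℤ_[p] →* P) (hι : Topology.IsClosedEmbedding ι)
    (hker : Set.range ι = (χ.ker : Set P))
    (H : Subgroup P) (hH : IsClosed (H : Set P))
    (hHχ : IsOpen (χ '' (H : Set P)))
    (hHι : ∃ x ∈ (H : Set P) ∩ Set.range ι, x ≠ 1) :
    IsOpen (H : Set P) := by
  have hrange : ι.range = χ.ker := SetLike.coe_injective (by rw [MonoidHom.coe_range, hker])
  have hcomap : H.comap ι ≠ ⊥ := by
    obtain ⟨_, ⟨hzH, z, rfl⟩, hz1⟩ := hHι
    exact fun hbot => hz1 (by rw [(Subgroup.eq_bot_iff_forall _).mp hbot z hzH, map_one])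
  have hkernel : H.relIndex χ.ker ≠ 0 := by
    rw [← hrange, ← Subgroup.index_comap]
    exact PadicInt.index_ne_zero_of_isClosed (hH.preimage hι.continuous) hcomap
  have himage : (H.map χ).index ≠ 0 :=
    Subgroup.index_ne_zero_of_isOpen (by rwa [Subgroup.coe_map])
  have : H.FiniteIndex :=
    ⟨Subgroup.index_ne_zero_of_relIndex_ker_ne_zero hχsurj hkernel himage⟩
  exact H.isOpen_of_isClosed_of_finiteIndex hH

/-- Let `P` be a topological group which is an extension of `ℤ_p^×` by
`ℤ_p`: there is a continuous surjective homomorphism `χ : P → ℤ_p^×` whose kernel is the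
image of a topological embedding `ι` of (the additive group) `ℤ_p`.  If `H ≤ P` is a
closed subgroup such that `χ(H)` is open in `ℤ_p^×` and `H ∩ ℤ_p ≠ {0}`, then `H` is
open in `P`. -/
theorem stmt2 (p : ℕ) [Fact p.Prime]
    (P : Type*) [Group P] [TopologicalSpace P] [IsTopologicalGroup P]
    (χ : P →* ℤ_[p]ˣ) (hχcont : Continuous χ) (hχsurj : Function.Surjective χ)
    (ι : Multiplicative ℤ_[p] →* P) (hι : Topology.IsClosedEmbedding ι)
    (hker : Set.range ι = (χ.ker : Set P))
    (H : Subgroup P) (hH : IsClosed (H : Set P))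
    (hHχ : IsOpen (χ '' (H : Set P)))
    (hHι : ∃ x ∈ (H : Set P) ∩ Set.range ι, x ≠ 1) :
    IsOpen (H : Set P) :=
  stmt2_general p P χ hχsurj ι hι hker H hH hHχ hHι
end

section
/- Let V be a finite-dimensional vector space over a field F, and let τ, g be automorphisms of V such that g τ g^{-1} = τ^m for some integer m ≥ 2. If τ has only finitely many eigenvalues (in an algebraic closure of F) and all eigenvalues of τ are nonzero, then every eigenvalue of τ is a root of unity. -/
/-!
Conjugation by `g` turns an eigenvector of `τ` for `μ` into one for `μ ^ m`, so the finite set of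
eigenvalues is stable under `μ ↦ μ ^ m`. Hence the values `μ ^ m ^ j` cannot all be distinct, and
two of them coinciding forces the nonzero `μ` to have finite order.
-/

theorem isOfFinOrder_of_pow_pow_mem_finite {G : Type*} [LeftCancelMonoid G] {x : G} {m : ℕ} (hm : 2 ≤ m) {S : Set G}
    (hS : S.Finite) (hx : ∀ j : ℕ, x ^ m ^ j ∈ S) : IsOfFinOrder x := by
  by_contra hfin
  have hinj : Function.Injective fun j : ℕ => x ^ m ^ j :=
    (injective_pow_iff_not_isOfFinOrder.mpr hfin).comp (Nat.pow_right_injective hm)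
  exact Set.infinite_range_of_injective hinj (hS.subset (Set.range_subset_iff.mpr hx))

namespace LinearEquiv

variable {R M : Type*} [CommRing R] [AddCommGroup M] [Module R M] {τ g : M ≃ₗ[R] M} {m : ℕ}

theorem hasEigenvalue_pow_of_conj_eq_pow (h : g * τ * g⁻¹ = τ ^ m) {μ : R}
    (hμ : Module.End.HasEigenvalue (τ : Module.End R M) μ) :
    Module.End.HasEigenvalue (τ : Module.End R M) (μ ^ m) := by
  obtain ⟨v, hv⟩ := hμ.exists_hasEigenvector
  have hcomm : τ * g⁻¹ = g⁻¹ * τ ^ m := by rw [← h]; group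
  have hτm : (τ ^ m) v = μ ^ m • v := by
    rw [← hv.pow_apply m, LinearEquiv.pow_apply, Module.End.pow_apply]; rfl
  refine Module.End.hasEigenvalue_of_hasEigenvector (x := g⁻¹ v) ⟨?_, ?_⟩
  · rw [Module.End.mem_eigenspace_iff]
    calc τ (g⁻¹ v) = (τ * g⁻¹) v := rfl
      _ = g⁻¹ ((τ ^ m) v) := by rw [hcomm]; rfl
      _ = μ ^ m • g⁻¹ v := by rw [hτm, map_smul]
  · exact (map_ne_zero_iff g⁻¹).mpr hv.2

theorem hasEigenvalue_pow_pow_of_conj_eq_pow (h : g * τ * g⁻¹ = τ ^ m) {μ : R}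
    (hμ : Module.End.HasEigenvalue (τ : Module.End R M) μ) (j : ℕ) :
    Module.End.HasEigenvalue (τ : Module.End R M) (μ ^ m ^ j) := by
  induction j with
  | zero => simpa using hμ
  | succ j ih => simpa [pow_succ, pow_mul] using hasEigenvalue_pow_of_conj_eq_pow h ih

end LinearEquiv

theorem stmt4_general (F : Type*) [Field F] (V : Type*) [AddCommGroup V] [Module F V]
    (τ g : V ≃ₗ[F] V) (m : ℕ) (hm : 2 ≤ m)
    (hconj : g * τ * g⁻¹ = τ ^ m)
    (hfin : {μ : AlgebraicClosure F |
      Module.End.HasEigenvalue (LinearMap.baseChange (AlgebraicClosure F)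
        (τ : V →ₗ[F] V)) μ}.Finite)
    (hne : ∀ μ : AlgebraicClosure F,
      Module.End.HasEigenvalue (LinearMap.baseChange (AlgebraicClosure F)
        (τ : V →ₗ[F] V)) μ → μ ≠ 0) :
    ∀ μ : AlgebraicClosure F,
      Module.End.HasEigenvalue (LinearMap.baseChange (AlgebraicClosure F)
        (τ : V →ₗ[F] V)) μ → ∃ k : ℕ, 0 < k ∧ μ ^ k = 1 := by
  set A := AlgebraicClosure F
  intro μ hμ
  have hconj_baseChange : g.baseChange F A V V * τ.baseChange F A V V * (g.baseChange F A V V)⁻¹ =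
      τ.baseChange F A V V ^ m := by
    rw [← LinearEquiv.baseChange_inv, ← LinearEquiv.baseChange_mul,
      ← LinearEquiv.baseChange_mul, ← LinearEquiv.baseChange_pow, hconj]
  have hiter := LinearEquiv.hasEigenvalue_pow_pow_of_conj_eq_pow hconj_baseChange hμ
  have hμ_finOrder : IsOfFinOrder (Units.mk0 μ (hne μ hμ)) :=
    isOfFinOrder_of_pow_pow_mem_finite hm (hfin.preimage Units.val_injective.injOn)
      fun j => by simpa using hiter j
  exact isOfFinOrder_iff_pow_eq_one.mp (Units.isOfFinOrder_val.mpr hμ_finOrder)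

/-- Let `V` be a finite-dimensional vector space over a field `F` and
`τ, g` automorphisms of `V` with `g τ g⁻¹ = τ^m` for some integer `m ≥ 2`.  If `τ` has
only finitely many eigenvalues in an algebraic closure of `F` and all of them are
nonzero, then every eigenvalue of `τ` is a root of unity. -/
theorem stmt4 (F : Type*) [Field F] (V : Type*) [AddCommGroup V] [Module F V]
    [FiniteDimensional F V] (τ g : V ≃ₗ[F] V) (m : ℕ) (hm : 2 ≤ m)
    (hconj : g * τ * g⁻¹ = τ ^ m)
    (hfin : {μ : AlgebraicClosure F |
      Module.End.HasEigenvalue (LinearMap.baseChange (AlgebraicClosure F)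
        (τ : V →ₗ[F] V)) μ}.Finite)
    (hne : ∀ μ : AlgebraicClosure F,
      Module.End.HasEigenvalue (LinearMap.baseChange (AlgebraicClosure F)
        (τ : V →ₗ[F] V)) μ → μ ≠ 0) :
    ∀ μ : AlgebraicClosure F,
      Module.End.HasEigenvalue (LinearMap.baseChange (AlgebraicClosure F)
        (τ : V →ₗ[F] V)) μ → ∃ k : ℕ, 0 < k ∧ μ ^ k = 1 :=
  stmt4_general F V τ g m hm hconj hfin hne
end

section
/- Let X be a torsor under ℤ_p (a ℤ_p-torsor with its natural profinite topology). The ring R_φ of locally polynomial ℚ_p-valued functions on X decomposes as R_φ = R_0 ⊗ R_st, where R_0 is the ring of locally constant functions and R_st is the ring of polynomial functions on X. -/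
section stmt10

variable (p : ℕ) [Fact p.Prime]
  (X : Type*) [TopologicalSpace X] [AddTorsor ℤ_[p] X] (x₀ : X)

/-- `R₀`: the `ℚ_p`-module of locally constant functions on the `ℤ_p`-torsor `X`. -/
noncomputable def R0 : Submodule ℚ_[p] (X → ℚ_[p]) where
  carrier := {f | IsLocallyConstant f}
  zero_mem' := IsLocallyConstant.const 0
  add_mem' := fun hf hg => hf.add hg
  smul_mem' := fun c _ hf => hf.comp fun y => c • y

/-- `R_st`: the `ℚ_p`-module of polynomial functions on the `ℤ_p`-torsor `X`
(via the trivialization `x ↦ x -ᵥ x₀`). -/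
noncomputable def Rst : Submodule ℚ_[p] (X → ℚ_[p]) where
  carrier := {f | ∃ P : Polynomial ℚ_[p], ∀ x, f x = P.eval ((x -ᵥ x₀ : ℤ_[p]) : ℚ_[p])}
  zero_mem' := ⟨0, by simp⟩
  add_mem' := by
    rintro f g ⟨P, hP⟩ ⟨Q, hQ⟩
    exact ⟨P + Q, fun x => by simp [hP x, hQ x]⟩
  smul_mem' := by
    rintro c f ⟨P, hP⟩
    exact ⟨Polynomial.C c * P, fun x => by simp [hP x]⟩

/-- `R_φ`: the `ℚ_p`-module of locally polynomial functions on the `ℤ_p`-torsor `X`: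
functions agreeing with a polynomial function on each member of a finite clopen cover. -/
noncomputable def Rphi : Submodule ℚ_[p] (X → ℚ_[p]) where
  carrier := {f | ∃ (ι : Type) (_ : Fintype ι) (U : ι → Set X),
    (∀ i, IsClopen (U i)) ∧ (∀ x, ∃ i, x ∈ U i) ∧
    ∀ i, ∃ P : Polynomial ℚ_[p], ∀ x ∈ U i, f x = P.eval ((x -ᵥ x₀ : ℤ_[p]) : ℚ_[p])}
  zero_mem' :=
    ⟨PUnit, inferInstance, fun _ => Set.univ, fun _ => isClopen_univ,
      fun x => ⟨PUnit.unit, trivial⟩, fun _ => ⟨0, by simp⟩⟩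
  add_mem' := by
    rintro f g ⟨ι₁, _, U₁, hcl₁, hcov₁, hP₁⟩ ⟨ι₂, _, U₂, hcl₂, hcov₂, hP₂⟩
    refine ⟨ι₁ × ι₂, inferInstance, fun i => U₁ i.1 ∩ U₂ i.2,
      fun i => (hcl₁ i.1).inter (hcl₂ i.2), ?_, ?_⟩
    · intro x
      obtain ⟨i, hi⟩ := hcov₁ x
      obtain ⟨j, hj⟩ := hcov₂ x
      exact ⟨(i, j), hi, hj⟩
    · rintro ⟨i, j⟩
      obtain ⟨P, hP⟩ := hP₁ i
      obtain ⟨Q, hQ⟩ := hP₂ j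
      exact ⟨P + Q, fun x hx => by simp [hP x hx.1, hQ x hx.2]⟩
  smul_mem' := by
    rintro c f ⟨ι, _, U, hcl, hcov, hP⟩
    refine ⟨ι, inferInstance, U, hcl, hcov, fun i => ?_⟩
    obtain ⟨P, hP⟩ := hP i
    exact ⟨Polynomial.C c * P, fun x hx => by simp [hP x hx]⟩

/-!
The monomials `(x -ᵥ x₀)ⁿ` form a basis of `R_st`, so injectivity of `R₀ ⊗ R_st → R_φ` amounts to:
if `∑ cₙ · (x -ᵥ x₀)ⁿ = 0` with locally constant `cₙ`, then every `cₙ = 0`. Near any point all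
`cₙ` are constant, so the polynomial `∑ cₙ(x) Tⁿ` vanishes on a nonempty open subset of `ℤ_p`,
which is infinite. The image of the multiplication map is `R₀ · R_st`. A locally polynomial
function is `∑ᵢ 𝟙[σ = i] · Pᵢ` for a locally constant choice `σ` of a member of its clopen cover;
conversely a locally constant function has finite range on the compact torsor, and its fibres
form a clopen cover on which its product with a polynomial function is polynomial.
-/

theorem Polynomial.eq_zero_of_forall_eval_zero_of_isOpen {R : Type*} [CommRing R] [IsDomain R]
    [TopologicalSpace R] [T1Space R] [PerfectSpace R] {P : Polynomial R} {U : Set R}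
    (hU : IsOpen U) (hne : U.Nonempty) (h : ∀ x ∈ U, P.eval x = 0) : P = 0 := by
  obtain ⟨x, hx⟩ := hne
  exact P.eq_zero_of_infinite_isRoot ((infinite_of_mem_nhds x (hU.mem_nhds hx)).mono h)

theorem eq_zero_of_sum_mul_pow_eq_zero {T R : Type*} [TopologicalSpace T] [CommRing R]
    [IsDomain R] [TopologicalSpace R] [T1Space R] [PerfectSpace R] {l : T → R} (hl : IsOpenMap l)
    {s : Finset ℕ} {c : ℕ → T → R} (hc : ∀ n ∈ s, IsLocallyConstant (c n))
    (h : ∀ x, ∑ n ∈ s, c n x * l x ^ n = 0) {n : ℕ} (hn : n ∈ s) : c n = 0 := by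
  funext x
  choose! U hUo hxU hUc using fun m hm => (hc m hm).exists_open x
  let Q : Polynomial R := ∑ m ∈ s, Polynomial.C (c m x) * Polynomial.X ^ m
  have hQ : Q = 0 := by
    refine Polynomial.eq_zero_of_forall_eval_zero_of_isOpen
      (hl _ (isOpen_biInter_finset hUo)) ⟨l x, x, Set.mem_iInter₂.2 hxU, rfl⟩ ?_
    rintro - ⟨y, hy, rfl⟩
    rw [← h y]
    simp only [Q, Polynomial.eval_finsetSum, Polynomial.eval_mul, Polynomial.eval_C,
      Polynomial.eval_pow, Polynomial.eval_X]
    exact Finset.sum_congr rfl fun m hm => by rw [hUc m hm y (Set.mem_iInter₂.1 hy m hm)]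
  simpa [Q, Polynomial.finsetSum_coeff, Polynomial.coeff_C_mul_X_pow, hn] using
    congrArg (Polynomial.coeff · n) hQ

theorem exists_isLocallyConstant_forall_mem {T ι : Type*} [TopologicalSpace T] [Finite ι]
    {U : ι → Set T} (hU : ∀ i, IsClopen (U i)) (hcov : ∀ x, ∃ i, x ∈ U i) :
    ∃ σ : T → ι, IsLocallyConstant σ ∧ ∀ x, x ∈ U (σ x) := by
  rcases isEmpty_or_nonempty T with hT | ⟨⟨x₀⟩⟩
  · exact ⟨isEmptyElim, .of_constant _ isEmptyElim, isEmptyElim⟩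
  have : Nonempty ι := (hcov x₀).nonempty
  -- `σ x` is chosen as a function of which of the `U i` contain `x`
  let pattern : T → ι → Bool := fun x i => (U i).boolIndicator x
  have hpattern : IsLocallyConstant pattern := (IsLocallyConstant.iff_continuous _).2 <|
    continuous_pi fun i => (continuous_boolIndicator_iff_isClopen _).2 (hU i)
  refine ⟨(fun b => Classical.epsilon (b · = true)) ∘ pattern, hpattern.comp _, fun x => ?_⟩
  obtain ⟨i, hi⟩ := hcov x
  exact (Set.mem_iff_boolIndicator _ _).2 <|
    Classical.epsilon_spec (p := (pattern x · = true)) ⟨i, (Set.mem_iff_boolIndicator _ _).1 hi⟩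

theorem isOpenMap_coe_vsub (hvadd : Continuous fun a : ℤ_[p] => a +ᵥ x₀) :
    IsOpenMap fun x : X => ((x -ᵥ x₀ : ℤ_[p]) : ℚ_[p]) := by
  refine PadicInt.isOpenEmbedding_coe.isOpenMap.comp (f := (· -ᵥ x₀)) fun V hV => ?_
  rw [show (· -ᵥ x₀) '' V = _ from (Equiv.vaddConst x₀).symm.image_eq_preimage_symm V]
  exact hV.preimage hvadd

noncomputable def evalRst : Polynomial ℚ_[p] →ₗ[ℚ_[p]] Rst p X x₀ where
  toFun P := ⟨fun x => P.eval ((x -ᵥ x₀ : ℤ_[p]) : ℚ_[p]), P, fun _ => rfl⟩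
  map_add' P Q := by ext; simp
  map_smul' c P := by ext; simp

omit [TopologicalSpace X] in
theorem evalRst_bijective : Function.Bijective (evalRst p X x₀) := by
  refine ⟨(injective_iff_map_eq_zero _).2 fun P hP => ?_, ?_⟩
  · refine Polynomial.eq_zero_of_forall_eval_zero_of_isOpen
      PadicInt.isOpenEmbedding_coe.isOpen_range ⟨_, (0 : ℤ_[p]), rfl⟩ ?_
    intro y hy
    obtain ⟨t, rfl⟩ : ∃ t : ℤ_[p], (t : ℚ_[p]) = y := hy
    simpa [evalRst] using congrFun (congrArg Subtype.val hP) (t +ᵥ x₀)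
  · rintro ⟨f, P, hP⟩
    exact ⟨P, Subtype.ext (funext fun x => (hP x).symm)⟩

noncomputable def Rst.basisMonomials : Module.Basis ℕ ℚ_[p] (Rst p X x₀) :=
  (Polynomial.basisMonomials ℚ_[p]).map (.ofBijective _ (evalRst_bijective p X x₀))

omit [TopologicalSpace X] in
theorem Rst.basisMonomials_apply (n : ℕ) (x : X) :
    (Rst.basisMonomials p X x₀ n : X → ℚ_[p]) x = ((x -ᵥ x₀ : ℤ_[p]) : ℚ_[p]) ^ n := by
  simp [Rst.basisMonomials, evalRst]

theorem R0_linearDisjoint_Rst (hvadd : Continuous fun a : ℤ_[p] => a +ᵥ x₀) :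
    (R0 p X).LinearDisjoint (Rst p X x₀) := by
  refine .of_basis_right' _ _ (Rst.basisMonomials p X x₀) <|
    (injective_iff_map_eq_zero _).2 fun c hc => Finsupp.ext fun n => ?_
  by_contra hn
  refine hn (Subtype.ext <| eq_zero_of_sum_mul_pow_eq_zero (isOpenMap_coe_vsub p X x₀ hvadd)
    (s := c.support) (c := fun n => (c n : X → ℚ_[p])) (fun n _ => (c n).2) (fun x => ?_)
    (Finsupp.mem_support_iff.2 hn))
  simpa [Submodule.mulRightMap_apply, Finsupp.sum, Rst.basisMonomials_apply] using congrFun hc x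

theorem mem_Rphi_iff {f : X → ℚ_[p]} :
    f ∈ Rphi p X x₀ ↔ ∃ (ι : Type) (_ : Fintype ι) (σ : X → ι) (P : ι → Polynomial ℚ_[p]),
      IsLocallyConstant σ ∧ ∀ x, f x = (P (σ x)).eval ((x -ᵥ x₀ : ℤ_[p]) : ℚ_[p]) := by
  constructor
  · rintro ⟨ι, _, U, hU, hcov, hP⟩
    choose P hP using hP
    obtain ⟨σ, hσ, hσU⟩ := exists_isLocallyConstant_forall_mem hU hcov
    exact ⟨ι, inferInstance, σ, P, hσ, fun x => hP _ x (hσU x)⟩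
  · rintro ⟨ι, _, σ, P, hσ, hf⟩
    exact ⟨ι, inferInstance, fun i => {x | σ x = i}, hσ.isClopen_fiber, fun x => ⟨σ x, rfl⟩,
      fun i => ⟨P i, fun x hx => hx ▸ hf x⟩⟩

theorem R0_mul_Rst [CompactSpace X] : R0 p X * Rst p X x₀ = Rphi p X x₀ := by
  classical
  refine le_antisymm (Submodule.mul_le.2 fun a ha g ⟨P, hP⟩ => (mem_Rphi_iff p X x₀).2 ?_) ?_
  · have := (IsLocallyConstant.range_finite ha).fintype
    exact ⟨Set.range a, inferInstance, Set.rangeFactorization a, fun c => .C c.1 * P,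
      ha.desc _ Subtype.val Subtype.val_injective, fun x => by simp [hP x, Set.rangeFactorization]⟩
  · intro f hf
    obtain ⟨ι, _, σ, P, hσ, hf⟩ := (mem_Rphi_iff p X x₀).1 hf
    have hsum : f = ∑ i, ((fun j => if j = i then 1 else 0) ∘ σ) *
        (evalRst p X x₀ (P i) : X → ℚ_[p]) := by
      funext x
      simp [hf x, evalRst]
    rw [hsum]
    exact Submodule.sum_mem _ fun i _ => Submodule.mul_mem_mul (hσ.comp _) (evalRst p X x₀ (P i)).2

/-- Let `X` be a `ℤ_p`-torsor (with its natural profinite topology).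
Then the ring `R_φ` of locally polynomial `ℚ_p`-valued functions on `X` decomposes as
`R_φ = R₀ ⊗ R_st`: the multiplication map `R₀ ⊗ R_st → R_φ`, `f ⊗ g ↦ f·g`, is an
isomorphism onto `R_φ`. -/
theorem stmt10
    (hvadd : Continuous fun a : ℤ_[p] => a +ᵥ x₀) :
    Function.Injective
      (TensorProduct.lift ((LinearMap.mul ℚ_[p] (X → ℚ_[p])).compl₁₂
        (R0 p X).subtype (Rst p X x₀).subtype)) ∧
    LinearMap.range
      (TensorProduct.lift ((LinearMap.mul ℚ_[p] (X → ℚ_[p])).compl₁₂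
        (R0 p X).subtype (Rst p X x₀).subtype)) = Rphi p X x₀ := by
  have : CompactSpace X := (Equiv.vaddConst x₀).surjective.compactSpace hvadd
  change Function.Injective (Submodule.mulMap _ _) ∧ LinearMap.range (Submodule.mulMap _ _) = _
  exact ⟨(R0_linearDisjoint_Rst p X x₀ hvadd).injective,
    (Submodule.mulMap_range _ _).trans (R0_mul_Rst p X x₀)⟩

end stmt10
end

section
/- Let G act on ℚ_p[t] (polynomials in one variable) through a character χ : G → ℤ_p^× and an additive cocycle, i.e., g·t = χ(g)^{-1} t + c(g) for some c(g) ∈ ℚ_p, extended as ring automorphisms. Assume χ has infinite image. If the G-submodules F_n = {polynomials of degree ≤ n} all split as F_n = F_{n-1} ⊕ L_n for G-stable lines L_n for all n ≥ 1, then c(g) = χ(g)^{-1}·a − a for some fixed a ∈ ℚ_p and all g (i.e., the cocycle c is a coboundary). -/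
/-- Let a group `G` act on `ℚ_p[t]` by ring automorphisms through a
character `χ : G → ℤ_p^×` with infinite image and an additive cocycle `c : G → ℚ_p`
(so `g·t = χ(g)⁻¹ t + c(g)` and `c(gh) = χ(h)⁻¹ c(g) + c(h)`).  If for every `n ≥ 1`
the `G`-submodule of polynomials of degree `≤ n` splits off a `G`-stable line of degree
exactly `n` (i.e. the filtration by degree splits), then the cocycle `c` is a
coboundary: `c(g) = χ(g)⁻¹ a - a` for some fixed `a ∈ ℚ_p`. -/
theorem stmt12 (p : ℕ) [Fact p.Prime] (G : Type*) [Group G]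
    (χ : G →* ℤ_[p]ˣ) (hχ : (Set.range χ).Infinite)
    (c : G → ℚ_[p])
    (hc : ∀ g h : G,
      c (g * h) = ((((χ h)⁻¹ : ℤ_[p]ˣ) : ℤ_[p]) : ℚ_[p]) * c g + c h)
    (hsplit : ∀ n : ℕ, 1 ≤ n → ∃ P : Polynomial ℚ_[p], P ≠ 0 ∧ P.natDegree = n ∧
      ∀ g : G, ∃ d : ℚ_[p],
        P.comp (Polynomial.C ((((χ g)⁻¹ : ℤ_[p]ˣ) : ℤ_[p]) : ℚ_[p]) * Polynomial.X
          + Polynomial.C (c g)) = d • P) :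
    ∃ a : ℚ_[p], ∀ g : G,
      c g = ((((χ g)⁻¹ : ℤ_[p]ˣ) : ℤ_[p]) : ℚ_[p]) * a - a := by
  obtain ⟨P, hP0, hPdeg, hPg⟩ := hsplit 1 le_rfl
  obtain ⟨b, a0, hPeq⟩ :=
    Polynomial.exists_eq_X_add_C_of_natDegree_le_one (p := P) hPdeg.le
  have hb : b ≠ 0 := by
    rintro rfl
    simp only [Polynomial.C_0, zero_mul, zero_add] at hPeq
    rw [hPeq] at hPdeg
    simp [Polynomial.natDegree_C] at hPdeg
  refine ⟨a0 / b, fun g => ?_⟩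
  obtain ⟨d, hd⟩ := hPg g
  rw [hPeq] at hd
  simp only [Polynomial.add_comp, Polynomial.mul_comp, Polynomial.C_comp,
    Polynomial.X_comp, smul_add, Polynomial.smul_C, smul_eq_mul,
    smul_mul_assoc] at hd
  have h1 := congrArg (fun q => Polynomial.coeff q 1) hd
  have h0 := congrArg (fun q => Polynomial.coeff q 0) hd
  simp only [mul_add, add_mul, Polynomial.coeff_add, Polynomial.coeff_C_mul,
    Polynomial.coeff_C, Polynomial.coeff_X_one, Polynomial.coeff_X_zero,
    Polynomial.coeff_smul, smul_eq_mul, mul_one, mul_zero, add_zero, zero_add,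
    if_false, reduceIte, one_ne_zero] at h1 h0
  have hdu : d = ((((χ g)⁻¹ : ℤ_[p]ˣ) : ℤ_[p]) : ℚ_[p]) :=
    mul_right_cancel₀ hb (by linear_combination -h1)
  rw [hdu] at h0
  rw [← mul_div_assoc, ← sub_div, eq_div_iff hb]
  linear_combination h0
end
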